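/- Let μ be a partition of n+2 and let (i,j) be a cell of μ such that (i+1,j) and (i,j+1) also belong to μ. Then M²_{i,j}(X,Y) = M_{μ/{(i,j),(i,j+1)}} + M_{μ/{(i,j),(i+1,j)}}; in particular, for every pair of distinct cells h₁, h₂ in the shadow of (i,j), Δ_{μ/{h₁,h₂}} ∈ M_{μ/{(i,j),(i,j+1)}} + M_{μ/{(i,j),(i+1,j)}}. -/

import Mathlib

open MvPolynomial

noncomputable section

/-- The monomial differential operator `∂^m` applied to a polynomial `Q`:
if `m = (m_v)_v`, this is `∏_v (∂/∂x_v)^{m_v}` applied to `Q`. -/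
def monDiff {σ : Type*} [DecidableEq σ] (m : σ →₀ ℕ) (Q : MvPolynomial σ ℚ) :
    MvPolynomial σ ℚ :=
  ∑ a ∈ Q.support,
    MvPolynomial.monomial (a - m) (Q.coeff a * ∏ v ∈ m.support, ((a v).descFactorial (m v) : ℚ))

/-- The differential operator `P(∂)` applied to `Q`. -/
def applyDiff {σ : Type*} [DecidableEq σ] (P Q : MvPolynomial σ ℚ) : MvPolynomial σ ℚ :=
  ∑ m ∈ P.support, P.coeff m • monDiff m Q

/-- The linear span of `Q` and all its partial derivatives (of all orders),
i.e. the space `L_∂[Q]`. -/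
def derivSpan {σ : Type*} [DecidableEq σ] (Q : MvPolynomial σ ℚ) :
    Submodule ℚ (MvPolynomial σ ℚ) :=
  Submodule.span ℚ {R | ∃ m : σ →₀ ℕ, R = monDiff m Q}

/-- Strict pseudo-lexicographic order: compare second coordinates first. -/
def plexLT {α : Type*} [LinearOrder α] (a b : α × α) : Prop :=
  a.2 < b.2 ∨ (a.2 = b.2 ∧ a.1 < b.1)

/-- Pseudo-lexicographic order on `ℕ × ℕ`. -/
def plexLE (a b : ℕ × ℕ) : Prop :=
  a.2 < b.2 ∨ (a.2 = b.2 ∧ a.1 ≤ b.1)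

instance : DecidableRel plexLE := fun a b => by unfold plexLE; exact inferInstance
instance : IsTrans (ℕ × ℕ) plexLE := ⟨by intro a b c hab hbc; unfold plexLE at *; omega⟩
instance : IsAntisymm (ℕ × ℕ) plexLE := ⟨by
  intro a b hab hba
  unfold plexLE at hab hba
  have h1 : a.1 = b.1 := by omega
  have h2 : a.2 = b.2 := by omega
  exact Prod.ext h1 h2⟩
instance : IsTotal (ℕ × ℕ) plexLE := ⟨by intro a b; unfold plexLE; omega⟩

/-- Lexicographic order on `ℕ × ℕ`: compare first coordinates first. -/
def lexLE (a b : ℕ × ℕ) : Prop :=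
  a.1 < b.1 ∨ (a.1 = b.1 ∧ a.2 ≤ b.2)

/-- Strict lexicographic order on `ℕ × ℕ`. -/
def lexLT (a b : ℕ × ℕ) : Prop :=
  a.1 < b.1 ∨ (a.1 = b.1 ∧ a.2 < b.2)

instance : DecidableRel lexLE := fun a b => by unfold lexLE; exact inferInstance
instance : IsTrans (ℕ × ℕ) lexLE := ⟨by intro a b c hab hbc; unfold lexLE at *; omega⟩
instance : IsAntisymm (ℕ × ℕ) lexLE := ⟨by
  intro a b hab hba
  unfold lexLE at hab hba
  have h1 : a.1 = b.1 := by omega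
  have h2 : a.2 = b.2 := by omega
  exact Prod.ext h1 h2⟩
instance : IsTotal (ℕ × ℕ) lexLE := ⟨by intro a b; unfold lexLE; omega⟩

/-- The lattice determinant of a list of `n` biexponents:
`Δ = det(x_i^{p_j} y_i^{q_j})`, in the ring `ℚ[x_1,…,x_n,y_1,…,y_n]`,
where `Sum.inl i` stands for `x_{i+1}` and `Sum.inr i` for `y_{i+1}`. -/
def deltaOfList (n : ℕ) (L : Fin n → ℕ × ℕ) : MvPolynomial (Fin n ⊕ Fin n) ℚ :=
  Matrix.det (Matrix.of fun i j : Fin n =>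
    X (Sum.inl i) ^ (L j).1 * X (Sum.inr i) ^ (L j).2)

/-- The lattice determinant of a lattice diagram (finite set of cells), the cells
being listed in increasing pseudo-lexicographic order; `0` if the diagram does not
have exactly `n` cells. -/
def deltaOfFinset (n : ℕ) (D : Finset (ℕ × ℕ)) : MvPolynomial (Fin n ⊕ Fin n) ℚ :=
  if h : D.card = n then
    deltaOfList n fun i => (D.sort plexLE).get ⟨i.1, by rw [Finset.length_sort, h]; exact i.2⟩
  else 0

open scoped Classical in
/-- The lattice determinant of a list of integer biexponents: `0` if some coordinate
is negative (and `0` if two biexponents coincide, since then the determinant has two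
equal columns). -/
def deltaOfListZ (n : ℕ) (L : Fin n → ℤ × ℤ) : MvPolynomial (Fin n ⊕ Fin n) ℚ :=
  if ∀ j, 0 ≤ (L j).1 ∧ 0 ≤ (L j).2 then
    deltaOfList n fun j => ((L j).1.toNat, (L j).2.toNat)
  else 0

/-- The Ferrers diagram of a partition with `h` rows and parts `μ 0 ≥ μ 1 ≥ …`:
the set of cells `(r, c)` with `r < h` and `c < μ r`. -/
def ferrers (h : ℕ) (μ : ℕ → ℕ) : Finset (ℕ × ℕ) :=
  (Finset.range h ×ˢ Finset.range (μ 0)).filter fun rc => rc.2 < μ rc.1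

/-- The shadow of the cell `(i, j)` in the diagram `F`. -/
def shadowF (F : Finset (ℕ × ℕ)) (i j : ℕ) : Finset (ℕ × ℕ) :=
  F.filter fun c => i ≤ c.1 ∧ j ≤ c.2

/-- The space `M^k_{i,j}(X,Y)`: the sum of the spaces `M_{μ/S}` over all `k`-element
subsets `S` of the shadow of `(i,j)` in the diagram `F` (of a partition of `n + k`). -/
def Mk (n k : ℕ) (F : Finset (ℕ × ℕ)) (i j : ℕ) :
    Submodule ℚ (MvPolynomial (Fin n ⊕ Fin n) ℚ) :=
  ⨆ S ∈ Finset.powersetCard k (shadowF F i j), derivSpan (deltaOfFinset n (F \ S))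

/-- The submodule of polynomials involving only the `x` variables
(elements of `Y`-degree `0`). -/
def onlyX (n : ℕ) : Submodule ℚ (MvPolynomial (Fin n ⊕ Fin n) ℚ) :=
  Subalgebra.toSubmodule (MvPolynomial.supported ℚ (Set.range Sum.inl))

/-- The space `M^k_{i,j}(X)`: the elements of `M^k_{i,j}(X,Y)` of `Y`-degree 0. -/
def MkX (n k : ℕ) (F : Finset (ℕ × ℕ)) (i j : ℕ) :
    Submodule ℚ (MvPolynomial (Fin n ⊕ Fin n) ℚ) :=
  Mk n k F i j ⊓ onlyX n

end

/-!
The operator `p_e(∂) = ∑ᵢ ∂x_i^{e.1} ∂y_i^{e.2}` acts on a lattice determinant column by column: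
it replaces one cell `x` by `x - e`, with a positive factor when `e ≤ x`. In a Ferrers diagram
with two holes `A`, `B`, the cell `x - e` is again a cell of the diagram (a repeated column, so the
term vanishes) unless it is one of the holes; hence only the cells `A + e`, `B + e` contribute.

Write `c = (i, j)`. Starting from the holes `{c, c + (1,0)}` and `{c, c + (0,1)}`, the second
hole is pushed outward: `p_f(∂)` sends the holes `{c, c + f}` to `{c, c + 2f}`, and for `f ≠ g`
the images of the holes `{c, c + g}` under `p_f(∂)` and of `{c, c + f}` under `p_g(∂)` share a
term with holes `{c + f, c + g}`, whose elimination leaves the holes `{c, c + f + g}` with a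
positive coefficient.
Finally `p_e(∂)` applied to the holes `{c, K}` moves the corner hole to `c + e`, at the cost of a
term with holes `{c, K + e}` that is already known to lie in the space.
-/

section DiffOperators

variable {σ : Type*}

theorem prod_descFactorial_support_eq {k : σ →₀ ℕ} {s : Finset σ} (hk : k.support ⊆ s)
    (b : σ →₀ ℕ) :
    ∏ v ∈ k.support, ((b v).descFactorial (k v) : ℚ) = ∏ v ∈ s, ((b v).descFactorial (k v) : ℚ) :=
  Finset.prod_subset hk fun v _ hv => by
    rw [Finsupp.notMem_support_iff.mp hv, Nat.descFactorial_zero, Nat.cast_one]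

variable [DecidableEq σ]

theorem monDiff_eq_sum_of_support_subset (m : σ →₀ ℕ) {Q : MvPolynomial σ ℚ}
    {s : Finset (σ →₀ ℕ)} (hs : Q.support ⊆ s) :
    monDiff m Q = ∑ a ∈ s,
      monomial (a - m) (Q.coeff a * ∏ v ∈ m.support, ((a v).descFactorial (m v) : ℚ)) :=
  Finset.sum_subset hs fun a _ ha => by rw [notMem_support_iff.mp ha, zero_mul, map_zero]

theorem monDiff_monomial (m a : σ →₀ ℕ) (c : ℚ) :
    monDiff m (monomial a c) =
      monomial (a - m) (c * ∏ v ∈ m.support, ((a v).descFactorial (m v) : ℚ)) := by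
  rw [monDiff_eq_sum_of_support_subset m (support_monomial_subset (a := c)),
    Finset.sum_singleton, coeff_monomial, if_pos rfl]

noncomputable def monDiffₗ (m : σ →₀ ℕ) : MvPolynomial σ ℚ →ₗ[ℚ] MvPolynomial σ ℚ where
  toFun := monDiff m
  map_add' P Q := by
    rw [monDiff_eq_sum_of_support_subset m support_add,
      monDiff_eq_sum_of_support_subset m (Finset.subset_union_left (s₂ := Q.support)),
      monDiff_eq_sum_of_support_subset m (Finset.subset_union_right (s₁ := P.support)),
      ← Finset.sum_add_distrib]
    simp only [coeff_add, add_mul, map_add]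
  map_smul' s Q := by
    rw [monDiff_eq_sum_of_support_subset m (support_smul (a := s) (f := Q)), monDiff,
      RingHom.id_apply, Finset.smul_sum]
    simp only [coeff_smul, smul_monomial, smul_eq_mul, mul_assoc]

theorem monDiffₗ_apply (m : σ →₀ ℕ) (Q : MvPolynomial σ ℚ) : monDiffₗ m Q = monDiff m Q := rfl

theorem monDiff_monDiff (m m' : σ →₀ ℕ) (Q : MvPolynomial σ ℚ) :
    monDiff m' (monDiff m Q) = monDiff (m + m') Q := by
  induction Q using MvPolynomial.induction_on' with
  | monomial a c =>
    rw [monDiff_monomial, monDiff_monomial, monDiff_monomial, tsub_tsub, mul_assoc,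
      prod_descFactorial_support_eq (Finset.subset_union_left (s₂ := m'.support)),
      prod_descFactorial_support_eq (Finset.subset_union_right (s₁ := m.support)),
      prod_descFactorial_support_eq Finsupp.support_add, ← Finset.prod_mul_distrib]
    congr 3 with v
    rw [← Nat.cast_mul, Finsupp.tsub_apply, Finsupp.add_apply, mul_comm,
      ← Nat.descFactorial_mul_descFactorial (Nat.le_add_right (m v) (m' v)),
      Nat.add_sub_cancel_left]
  | add P Q hP hQ =>
    simp only [← monDiffₗ_apply, map_add] at hP hQ ⊢
    rw [hP, hQ]

theorem monDiff_mem_derivSpan {Q P : MvPolynomial σ ℚ} (m : σ →₀ ℕ) (hP : P ∈ derivSpan Q) :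
    monDiff m P ∈ derivSpan Q := by
  rw [← monDiffₗ_apply]
  induction hP using Submodule.span_induction with
  | mem y hy =>
    obtain ⟨m', rfl⟩ := hy
    exact Submodule.subset_span ⟨m' + m, monDiff_monDiff m' m Q⟩
  | zero => simp
  | add y z _ _ hy hz => simpa using add_mem hy hz
  | smul s y _ hy => simpa using Submodule.smul_mem _ s hy

theorem self_mem_derivSpan (Q : MvPolynomial σ ℚ) : Q ∈ derivSpan Q :=
  Submodule.subset_span ⟨0, by simp [monDiff]⟩

theorem derivSpan_le {Q : MvPolynomial σ ℚ}
    {V : Submodule ℚ (MvPolynomial σ ℚ)} (hV : ∀ m, ∀ P ∈ V, monDiff m P ∈ V) (hQ : Q ∈ V) :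
    derivSpan Q ≤ V :=
  Submodule.span_le.mpr fun _ ⟨m, hm⟩ => hm ▸ hV m Q hQ

theorem monDiff_mem_derivSpan_sup {Q₁ Q₂ P : MvPolynomial σ ℚ}
    (m : σ →₀ ℕ) (hP : P ∈ derivSpan Q₁ ⊔ derivSpan Q₂) :
    monDiff m P ∈ derivSpan Q₁ ⊔ derivSpan Q₂ := by
  obtain ⟨P₁, hP₁, P₂, hP₂, rfl⟩ := Submodule.mem_sup.mp hP
  rw [← monDiffₗ_apply, map_add]
  exact Submodule.add_mem_sup (monDiff_mem_derivSpan m hP₁) (monDiff_mem_derivSpan m hP₂)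

end DiffOperators

section LatticeDeterminant

variable {n : ℕ}

theorem deltaOfList_comp_perm (L : Fin n → ℕ × ℕ) (π : Equiv.Perm (Fin n)) :
    deltaOfList n (L ∘ π) = ((Equiv.Perm.sign π : ℤ) : ℚ) • deltaOfList n L := by
  rw [deltaOfList, deltaOfList, smul_eq_C_mul, map_intCast, ← Matrix.det_permute']
  rfl

theorem deltaOfList_eq_zero_of_eq (L : Fin n → ℕ × ℕ) {j j' : Fin n} (hjj : j ≠ j')
    (h : L j = L j') : deltaOfList n L = 0 := by
  rw [deltaOfList, ← Matrix.det_transpose]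
  exact Matrix.det_zero_of_row_eq hjj (funext fun i => by simp [h])

theorem deltaOfList_update_update_comm (L : Fin n → ℕ × ℕ) {j₁ j₂ : Fin n} (hj : j₁ ≠ j₂)
    (x y : ℕ × ℕ) :
    deltaOfList n (Function.update (Function.update L j₁ x) j₂ y)
      = -deltaOfList n (Function.update (Function.update L j₁ y) j₂ x) := by
  have hswap : Function.update (Function.update L j₁ y) j₂ x ∘ Equiv.swap j₁ j₂
      = Function.update (Function.update L j₁ x) j₂ y := by
    funext t
    rcases eq_or_ne t j₁ with rfl | h₁
    · simp [hj]
    rcases eq_or_ne t j₂ with rfl | h₂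
    · simp [hj]
    · simp [Equiv.swap_apply_of_ne_of_ne h₁ h₂, h₁, h₂]
  rw [← hswap, deltaOfList_comp_perm, Equiv.Perm.sign_swap hj]
  simp

/-- The exponent of the monomial `∏ᵢ x_{π i}^{(L i).1} y_{π i}^{(L i).2}`. -/
noncomputable def latticeExponent (L : Fin n → ℕ × ℕ) (π : Equiv.Perm (Fin n)) :
    (Fin n ⊕ Fin n) →₀ ℕ :=
  Finsupp.equivFunOnFinite.symm (Sum.elim (fun i => (L (π.symm i)).1) fun i => (L (π.symm i)).2)

theorem deltaOfList_eq_sum (L : Fin n → ℕ × ℕ) :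
    deltaOfList n L = ∑ π : Equiv.Perm (Fin n),
      ((Equiv.Perm.sign π : ℤ) : ℚ) • monomial (latticeExponent L π) 1 := by
  rw [deltaOfList, Matrix.det_apply]
  refine Finset.sum_congr rfl fun π _ => ?_
  congr 1
  rw [monomial_eq, C_1, one_mul, Finsupp.prod_fintype _ _ fun _ => pow_zero _,
    Fintype.prod_sum_type]
  simp only [Matrix.of_apply, Finset.prod_mul_distrib, latticeExponent,
    Finsupp.coe_equivFunOnFinite_symm, Sum.elim_inl, Sum.elim_inr]
  rw [← Equiv.prod_comp π (fun i => X (Sum.inl i) ^ (L (π.symm i)).1),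
    ← Equiv.prod_comp π (fun i => X (Sum.inr i) ^ (L (π.symm i)).2)]
  simp

/-- The constant produced by `∂x^{e.1} ∂y^{e.2}` on `x^{x.1} y^{x.2}`. -/
def descFactorial₂ (x e : ℕ × ℕ) : ℚ := x.1.descFactorial e.1 * x.2.descFactorial e.2

theorem descFactorial₂_pos {x e : ℕ × ℕ} (h : e ≤ x) : 0 < descFactorial₂ x e := by
  have h₁ : 0 < x.1.descFactorial e.1 := Nat.descFactorial_pos.mpr h.1
  have h₂ : 0 < x.2.descFactorial e.2 := Nat.descFactorial_pos.mpr h.2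
  unfold descFactorial₂
  positivity

theorem descFactorial₂_eq_zero {x e : ℕ × ℕ} (h : ¬e ≤ x) : descFactorial₂ x e = 0 := by
  rw [Prod.le_def, not_and_or, not_le, not_le] at h
  rcases h with h | h <;> simp [descFactorial₂, Nat.descFactorial_eq_zero_iff_lt.mpr h]

noncomputable def powerSumDiff (n : ℕ) (e : ℕ × ℕ) (Q : MvPolynomial (Fin n ⊕ Fin n) ℚ) :
    MvPolynomial (Fin n ⊕ Fin n) ℚ :=
  ∑ i : Fin n, monDiff (Finsupp.single (Sum.inl i) e.1 + Finsupp.single (Sum.inr i) e.2) Q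

theorem monDiff_single_add_single_monomial (i : Fin n) (e : ℕ × ℕ) (a : (Fin n ⊕ Fin n) →₀ ℕ) :
    monDiff (Finsupp.single (Sum.inl i) e.1 + Finsupp.single (Sum.inr i) e.2) (monomial a 1)
      = descFactorial₂ (a (Sum.inl i), a (Sum.inr i)) e
        • monomial (a - (Finsupp.single (Sum.inl i) e.1 + Finsupp.single (Sum.inr i) e.2)) 1 := by
  set m := Finsupp.single (Sum.inl i) e.1 + Finsupp.single (Sum.inr i) e.2
  have hsupp : m.support ⊆ {Sum.inl i, Sum.inr i} :=
    Finsupp.support_add.trans (Finset.union_subset_union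
      Finsupp.support_single_subset Finsupp.support_single_subset)
  rw [monDiff_monomial, prod_descFactorial_support_eq hsupp,
    Finset.prod_pair Sum.inl_ne_inr, smul_monomial, one_mul, smul_eq_mul, mul_one]
  simp [m, descFactorial₂]

theorem latticeExponent_update (L : Fin n → ℕ × ℕ) (π : Equiv.Perm (Fin n)) (j : Fin n)
    (e : ℕ × ℕ) :
    latticeExponent (Function.update L j (L j - e)) π = latticeExponent L π
      - (Finsupp.single (Sum.inl (π j)) e.1 + Finsupp.single (Sum.inr (π j)) e.2) := by
  ext (i | i) <;>
  · rcases eq_or_ne (π.symm i) j with rfl | h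
    · simp [latticeExponent]
    · have h' : π j ≠ i := fun h'' => h (by rw [← h'', Equiv.symm_apply_apply])
      simp [latticeExponent, h, h']

theorem powerSumDiff_deltaOfList (e : ℕ × ℕ) (L : Fin n → ℕ × ℕ) :
    powerSumDiff n e (deltaOfList n L) = ∑ j : Fin n,
      descFactorial₂ (L j) e • deltaOfList n (Function.update L j (L j - e)) := by
  set m : Fin n → (Fin n ⊕ Fin n) →₀ ℕ :=
    fun i => Finsupp.single (Sum.inl i) e.1 + Finsupp.single (Sum.inr i) e.2
  have hterm : ∀ i, monDiff (m i) (deltaOfList n L) = ∑ π : Equiv.Perm (Fin n),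
      ((Equiv.Perm.sign π : ℤ) : ℚ) • descFactorial₂ (L (π.symm i)) e
        • monomial (latticeExponent L π - m i) 1 := by
    intro i
    rw [deltaOfList_eq_sum, ← monDiffₗ_apply, map_sum]
    simp [m, monDiffₗ_apply, monDiff_single_add_single_monomial, latticeExponent]
  rw [powerSumDiff, Finset.sum_congr rfl fun i _ => hterm i, Finset.sum_comm]
  rw [Finset.sum_congr rfl fun π _ => (Equiv.sum_comp π _).symm, Finset.sum_comm]
  refine Finset.sum_congr rfl fun j _ => ?_
  simp only [deltaOfList_eq_sum, Finset.smul_sum, Equiv.symm_apply_apply, m,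
    latticeExponent_update]
  exact Finset.sum_congr rfl fun π _ => smul_comm _ _ _

end LatticeDeterminant

section Enumerations

variable {α : Type*} {n : ℕ}

def Enumerates (L : Fin n → α) (D : Finset α) : Prop :=
  Function.Injective L ∧ ∀ x, x ∈ D ↔ ∃ t, L t = x

theorem Enumerates.mem {L : Fin n → α} {D : Finset α} (hL : Enumerates L D) (t : Fin n) :
    L t ∈ D :=
  (hL.2 _).mpr ⟨t, rfl⟩

theorem Enumerates.exists_eq {L : Fin n → α} {D : Finset α} (hL : Enumerates L D) {x : α}
    (hx : x ∈ D) : ∃ t, L t = x :=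
  (hL.2 x).mp hx

theorem Enumerates.card_eq [DecidableEq α] {L : Fin n → α} {D : Finset α}
    (hL : Enumerates L D) : D.card = n := by
  have : D = Finset.univ.image L := by ext x; simp [hL.2 x]
  rw [this, Finset.card_image_of_injective _ hL.1, Finset.card_univ, Fintype.card_fin]

theorem Enumerates.exists_perm {L L' : Fin n → α} {D : Finset α} (hL : Enumerates L D)
    (hL' : Enumerates L' D) : ∃ π : Equiv.Perm (Fin n), L' = L ∘ π := by
  choose f hf using fun t => hL.exists_eq (hL'.mem t)
  have hf_inj : Function.Injective f := fun t₁ t₂ h => hL'.1 (by rw [← hf, ← hf, h])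
  exact ⟨Equiv.ofBijective f hf_inj.bijective_of_finite, funext fun t => (hf t).symm⟩

theorem Enumerates.update [DecidableEq α] {L : Fin n → α} {D : Finset α}
    (hL : Enumerates L D) {v : α} (hv : v ∉ D) (j : Fin n) :
    Enumerates (Function.update L j v) (insert v (D.erase (L j))) := by
  have hne : ∀ t, L t ≠ v := fun t h => hv (h ▸ hL.mem t)
  refine ⟨fun t₁ t₂ h => ?_, fun x => ?_⟩
  · by_cases h₁ : t₁ = j <;> by_cases h₂ : t₂ = j <;>
      simp_all [Function.update_apply, hL.1.eq_iff, eq_comm]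
  · simp only [Finset.mem_insert, Finset.mem_erase, hL.2 x]
    constructor
    · rintro (rfl | ⟨hx, t, rfl⟩)
      · exact ⟨j, by simp⟩
      · exact ⟨t, by simp [show t ≠ j by rintro rfl; exact hx rfl]⟩
    · rintro ⟨t, rfl⟩
      rcases eq_or_ne t j with rfl | h
      · simp
      · exact Or.inr ⟨by simpa [h] using hL.1.ne h, t, by simp [h]⟩

end Enumerations

section Sorting

variable {n : ℕ}

theorem enumerates_sort {D : Finset (ℕ × ℕ)} (hD : D.card = n) :
    Enumerates (fun t : Fin n =>
      (D.sort plexLE).get ⟨t, by rw [Finset.length_sort, hD]; exact t.2⟩) D := by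
  refine ⟨fun t₁ t₂ h => Fin.ext ?_, fun x => ?_⟩
  · simpa using List.nodup_iff_injective_get.mp (Finset.sort_nodup D plexLE) h
  · rw [← Finset.mem_sort plexLE, List.mem_iff_get]
    constructor
    · rintro ⟨t, rfl⟩
      exact ⟨⟨t, by simpa [hD] using t.2⟩, rfl⟩
    · rintro ⟨t, rfl⟩
      exact ⟨_, rfl⟩

theorem deltaOfFinset_mem_iff {D : Finset (ℕ × ℕ)} {L : Fin n → ℕ × ℕ} (hL : Enumerates L D)
    {V : Submodule ℚ (MvPolynomial (Fin n ⊕ Fin n) ℚ)} :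
    deltaOfFinset n D ∈ V ↔ deltaOfList n L ∈ V := by
  have hD := hL.card_eq
  obtain ⟨π, hπ⟩ := hL.exists_perm (enumerates_sort hD)
  rw [deltaOfFinset, dif_pos hD, hπ, deltaOfList_comp_perm]
  exact V.smul_mem_iff (by rcases Int.units_eq_one_or (Equiv.Perm.sign π) with h | h <;> simp [h])

end Sorting

section HoleShifts

variable {n : ℕ} {F : Finset (ℕ × ℕ)} {L : Fin n → ℕ × ℕ} {A B e : ℕ × ℕ}

theorem Enumerates.update_hole (hL : Enumerates L (F \ {A, B})) (hA : A ∈ F) (hAB : A ≠ B)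
    (j : Fin n) : Enumerates (Function.update L j A) (F \ {L j, B}) := by
  have hLj := hL.mem j
  convert hL.update (v := A) (by simp) j using 1
  ext x
  simp only [Finset.mem_sdiff, Finset.mem_insert, Finset.mem_singleton, Finset.mem_erase] at hLj ⊢
  grind

theorem descFactorial₂_smul_update_eq_zero (hF : IsLowerSet (F : Set (ℕ × ℕ)))
    (hL : Enumerates L (F \ {A, B})) (he : e ≠ 0) {t : Fin n} (hA : L t ≠ A + e)
    (hB : L t ≠ B + e) :
    descFactorial₂ (L t) e • deltaOfList n (Function.update L t (L t - e)) = 0 := by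
  by_cases hle : e ≤ L t
  · have hmem : L t - e ∈ F \ {A, B} := by
      have hF' : L t - e ∈ F := hF tsub_le_self (Finset.mem_sdiff.mp (hL.mem t)).1
      simp only [Finset.mem_sdiff, Finset.mem_insert, Finset.mem_singleton, not_or]
      refine ⟨hF', fun h => hA ?_, fun h => hB ?_⟩ <;> rw [← h, tsub_add_cancel_of_le hle]
    obtain ⟨s, hs⟩ := hL.exists_eq hmem
    have hst : s ≠ t := by
      rintro rfl
      rw [Prod.le_def] at hle
      rw [Prod.ext_iff, Prod.fst_sub, Prod.snd_sub] at hs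
      exact he (Prod.ext (by simp; omega) (by simp; omega))
    rw [deltaOfList_eq_zero_of_eq _ hst (by simp [hst, hs]), smul_zero]
  · rw [descFactorial₂_eq_zero hle, zero_smul]

theorem powerSumDiff_deltaOfList_eq_add (hF : IsLowerSet (F : Set (ℕ × ℕ)))
    (hL : Enumerates L (F \ {A, B})) (he : e ≠ 0) (hAB : A ≠ B) {j₁ j₂ : Fin n}
    (h₁ : L j₁ = A + e) (h₂ : L j₂ = B + e) :
    powerSumDiff n e (deltaOfList n L)
      = descFactorial₂ (A + e) e • deltaOfList n (Function.update L j₁ A)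
        + descFactorial₂ (B + e) e • deltaOfList n (Function.update L j₂ B) := by
  have hj : j₁ ≠ j₂ := fun h => hAB (add_right_cancel (h₁.symm.trans (h ▸ h₂)))
  rw [powerSumDiff_deltaOfList, Fintype.sum_eq_add j₁ j₂ hj fun t ht =>
    descFactorial₂_smul_update_eq_zero hF hL he (fun h => ht.1 (hL.1 (h.trans h₁.symm)))
      (fun h => ht.2 (hL.1 (h.trans h₂.symm))), h₁, h₂, add_tsub_cancel_right,
    add_tsub_cancel_right]

theorem powerSumDiff_deltaOfList_eq_single (hF : IsLowerSet (F : Set (ℕ × ℕ)))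
    (hL : Enumerates L (F \ {A, B})) (he : e ≠ 0) {j : Fin n} (hA : L j = A + e)
    (hB : ∀ t, L t ≠ B + e) :
    powerSumDiff n e (deltaOfList n L)
      = descFactorial₂ (A + e) e • deltaOfList n (Function.update L j A) := by
  rw [powerSumDiff_deltaOfList, Fintype.sum_eq_single j fun t ht =>
    descFactorial₂_smul_update_eq_zero hF hL he (fun h => ht (hL.1 (h.trans hA.symm))) (hB t),
    hA, add_tsub_cancel_right]

theorem exists_smul_deltaOfList_update_eq_sub (hF : IsLowerSet (F : Set (ℕ × ℕ))) {c f g : ℕ × ℕ}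
    (hL : Enumerates L (F \ {c, c + g})) (hcg : c + g ∈ F) (hf : f ≠ 0) (hg : g ≠ 0)
    {j₁ j₂ : Fin n} (hj₁ : L j₁ = c + f) (hj₂ : L j₂ = c + (f + g)) :
    ∃ a b r : ℚ, r ≠ 0 ∧ r • deltaOfList n (Function.update L j₂ (c + g))
      = a • powerSumDiff n f (deltaOfList n L)
        - b • powerSumDiff n g (deltaOfList n (Function.update L j₁ (c + g))) := by
  have hL' : Enumerates (Function.update L j₁ (c + g)) (F \ {c, c + f}) := by
    rw [Finset.pair_comm] at hL ⊢
    simpa [hj₁] using hL.update_hole hcg (left_ne_add.mpr hg).symm j₁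
  have hj : j₁ ≠ j₂ := by
    rintro rfl
    simp [hj₁, hg] at hj₂
  have hI := powerSumDiff_deltaOfList_eq_add hF hL hf (left_ne_add.mpr hg) hj₁
    (hj₂.trans (by abel))
  have hII := powerSumDiff_deltaOfList_eq_add hF hL' hg (left_ne_add.mpr hf)
    (Function.update_self j₁ (c + g) L) ((Function.update_of_ne hj.symm _ _).trans
      (hj₂.trans (by abel)))
  have hL_eq : Function.update L j₁ (c + f) = L := by rw [← hj₁, Function.update_eq_self]
  rw [Function.update_idem, deltaOfList_update_update_comm _ hj, hL_eq] at hII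
  set a₁ := descFactorial₂ (c + f) f
  set a₂ := descFactorial₂ (c + g + f) f
  set b₁ := descFactorial₂ (c + g) g
  set b₂ := descFactorial₂ (c + f + g) g
  -- both expansions contain the determinant with holes `{c + f, c + g}`; eliminate it
  refine ⟨b₁, a₁, b₁ * a₂ + a₁ * b₂, ?_, ?_⟩
  · exact (add_pos (mul_pos (descFactorial₂_pos le_add_self) (descFactorial₂_pos le_add_self))
      (mul_pos (descFactorial₂_pos le_add_self) (descFactorial₂_pos le_add_self))).ne'
  · rw [hI, hII]
    module

end HoleShifts

section TwoHoles

variable {n : ℕ} {F : Finset (ℕ × ℕ)} {V : Submodule ℚ (MvPolynomial (Fin n ⊕ Fin n) ℚ)}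

theorem powerSumDiff_mem (hV : ∀ m, ∀ P ∈ V, monDiff m P ∈ V) (e : ℕ × ℕ)
    {P : MvPolynomial (Fin n ⊕ Fin n) ℚ} (hP : P ∈ V) : powerSumDiff n e P ∈ V :=
  Submodule.sum_mem _ fun _ _ => hV _ _ hP

theorem exists_enumerates_sdiff_pair (hcard : F.card = n + 2) {A B : ℕ × ℕ} (hA : A ∈ F)
    (hB : B ∈ F) (hAB : A ≠ B) : ∃ L : Fin n → ℕ × ℕ, Enumerates L (F \ {A, B}) := by
  refine ⟨_, enumerates_sort ?_⟩
  rw [Finset.card_sdiff_of_subset (Finset.insert_subset hA (Finset.singleton_subset_iff.mpr hB)),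
    Finset.card_pair hAB, hcard, Nat.add_sub_cancel]

theorem deltaOfFinset_sdiff_mem_of_double (hF : IsLowerSet (F : Set (ℕ × ℕ)))
    (hcard : F.card = n + 2) (hV : ∀ m, ∀ P ∈ V, monDiff m P ∈ V) {c f : ℕ × ℕ} (hf : f ≠ 0)
    (hK : c + (f + f) ∈ F) (hmem : deltaOfFinset n (F \ {c, c + f}) ∈ V) :
    deltaOfFinset n (F \ {c, c + (f + f)}) ∈ V := by
  have hK' : c + (f + f) = c + f + f := (add_assoc c f f).symm
  have hcf : c + f ∈ F := hF (le_self_add.trans_eq hK'.symm) hK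
  have hcf_ne : c + f ≠ c := (left_ne_add.mpr hf).symm
  obtain ⟨L, hL⟩ := exists_enumerates_sdiff_pair hcard hcf (hF le_self_add hK) hcf_ne
  obtain ⟨j, hj⟩ := hL.exists_eq (x := c + (f + f)) (by simp [hK, hf])
  have hj' : L j = c + f + f := hj.trans hK'
  have hupd : Enumerates (Function.update L j (c + f)) (F \ {c, c + (f + f)}) := by
    rw [Finset.pair_comm]
    simpa [hj] using hL.update_hole hcf hcf_ne j
  rw [Finset.pair_comm, deltaOfFinset_mem_iff hL] at hmem
  have hpow := powerSumDiff_mem hV f hmem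
  rw [powerSumDiff_deltaOfList_eq_single hF hL hf hj' (fun t h => by simpa [h] using hL.mem t),
    V.smul_mem_iff (descFactorial₂_pos le_add_self).ne'] at hpow
  exact (deltaOfFinset_mem_iff hupd).mpr hpow

theorem deltaOfFinset_sdiff_mem_of_add (hF : IsLowerSet (F : Set (ℕ × ℕ)))
    (hcard : F.card = n + 2) (hV : ∀ m, ∀ P ∈ V, monDiff m P ∈ V) {c f g : ℕ × ℕ} (hf : f ≠ 0)
    (hg : g ≠ 0) (hfg : f ≠ g) (hK : c + (f + g) ∈ F)
    (hf_mem : deltaOfFinset n (F \ {c, c + f}) ∈ V)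
    (hg_mem : deltaOfFinset n (F \ {c, c + g}) ∈ V) :
    deltaOfFinset n (F \ {c, c + (f + g)}) ∈ V := by
  have hcf : c + f ∈ F := hF (add_le_add_right le_self_add c) hK
  have hcg : c + g ∈ F := hF (add_le_add_right le_add_self c) hK
  have hc : c ∈ F := hF le_self_add hK
  obtain ⟨L₀, hL₀⟩ := exists_enumerates_sdiff_pair hcard hc hcg (left_ne_add.mpr hg)
  obtain ⟨j₁, hj₁⟩ := hL₀.exists_eq (x := c + f) (by simp [hcf, hf, hfg])
  obtain ⟨j₂, hj₂⟩ := hL₀.exists_eq (x := c + (f + g)) (by simp [hK, hf, hg])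
  have hβ : Enumerates (Function.update L₀ j₂ (c + g)) (F \ {c, c + (f + g)}) := by
    rw [Finset.pair_comm] at hL₀ ⊢
    simpa [hj₂] using hL₀.update_hole hcg (left_ne_add.mpr hg).symm j₂
  have hL₁ : Enumerates (Function.update L₀ j₁ (c + g)) (F \ {c, c + f}) := by
    rw [Finset.pair_comm] at hL₀ ⊢
    simpa [hj₁] using hL₀.update_hole hcg (left_ne_add.mpr hg).symm j₁
  obtain ⟨a, b, r, hr, hcomb⟩ := exists_smul_deltaOfList_update_eq_sub hF hL₀ hcg hf hg hj₁ hj₂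
  rw [deltaOfFinset_mem_iff hL₀] at hg_mem
  rw [deltaOfFinset_mem_iff hL₁] at hf_mem
  rw [deltaOfFinset_mem_iff hβ, ← V.smul_mem_iff hr, hcomb]
  exact V.sub_mem (V.smul_mem _ (powerSumDiff_mem hV f hg_mem))
    (V.smul_mem _ (powerSumDiff_mem hV g hf_mem))

theorem deltaOfFinset_sdiff_corner_mem (hF : IsLowerSet (F : Set (ℕ × ℕ)))
    (hcard : F.card = n + 2) (hV : ∀ m, ∀ P ∈ V, monDiff m P ∈ V) {c : ℕ × ℕ}
    (h₁₀ : deltaOfFinset n (F \ {c, c + (1, 0)}) ∈ V)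
    (h₀₁ : deltaOfFinset n (F \ {c, c + (0, 1)}) ∈ V) (d : ℕ × ℕ) (hd : d ≠ 0)
    (hK : c + d ∈ F) : deltaOfFinset n (F \ {c, c + d}) ∈ V := by
  by_cases hunit : d = (1, 0) ∨ d = (0, 1)
  · rcases hunit with rfl | rfl
    exacts [h₁₀, h₀₁]
  obtain ⟨f, g, hf, hg, rfl⟩ : ∃ f g : ℕ × ℕ, f ≠ 0 ∧ g ≠ 0 ∧ f + g = d := by
    obtain ⟨d₁, d₂⟩ := d
    simp only [Prod.ext_iff, Prod.fst_zero, Prod.snd_zero, ne_eq] at hunit hd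
    by_cases h : d₁ = 0
    · exact ⟨(0, 1), (0, d₂ - 1), by simp, by simp; omega, Prod.ext (by simp [h]) (by simp; omega)⟩
    · exact ⟨(1, 0), (d₁ - 1, d₂), by simp, by simp; omega, Prod.ext (by simp; omega) (by simp)⟩
  have hf_mem := deltaOfFinset_sdiff_corner_mem hF hcard hV h₁₀ h₀₁ f hf
    (hF (add_le_add_right le_self_add c) hK)
  rcases eq_or_ne f g with rfl | hfg
  · exact deltaOfFinset_sdiff_mem_of_double hF hcard hV hf hK hf_mem
  · exact deltaOfFinset_sdiff_mem_of_add hF hcard hV hf hg hfg hK hf_mem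
      (deltaOfFinset_sdiff_corner_mem hF hcard hV h₁₀ h₀₁ g hg
        (hF (add_le_add_right le_add_self c) hK))
termination_by d.1 + d.2
decreasing_by
  all_goals
    subst_vars
    have h₁ := Prod.ext_iff.not.mp hf
    have h₂ := Prod.ext_iff.not.mp hg
    simp only [Prod.fst_add, Prod.snd_add, Prod.fst_zero, Prod.snd_zero] at h₁ h₂ ⊢
    omega

theorem deltaOfFinset_sdiff_mem_of_corner (hF : IsLowerSet (F : Set (ℕ × ℕ)))
    (hcard : F.card = n + 2) (hV : ∀ m, ∀ P ∈ V, monDiff m P ∈ V) {c d e : ℕ × ℕ}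
    (hcorner : ∀ d', d' ≠ 0 → c + d' ∈ F → deltaOfFinset n (F \ {c, c + d'}) ∈ V)
    (hd : d ≠ 0) (he : e ≠ 0) (hed : e ≠ d) (hH : c + e ∈ F) (hK : c + d ∈ F) :
    deltaOfFinset n (F \ {c + e, c + d}) ∈ V := by
  have hc : c ∈ F := hF le_self_add hK
  have hcd : c ≠ c + d := left_ne_add.mpr hd
  obtain ⟨L, hL⟩ := exists_enumerates_sdiff_pair hcard hc hK hcd
  obtain ⟨j₁, hj₁⟩ := hL.exists_eq (x := c + e) (by simp [hH, he, hed])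
  have hα : Enumerates (Function.update L j₁ c) (F \ {c + e, c + d}) := by
    simpa [hj₁] using hL.update_hole hc hcd j₁
  have hpow := powerSumDiff_mem hV e ((deltaOfFinset_mem_iff hL).mp (hcorner d hd hK))
  have hcoef : descFactorial₂ (c + e) e ≠ 0 := (descFactorial₂_pos le_add_self).ne'
  rw [deltaOfFinset_mem_iff hα, ← V.smul_mem_iff hcoef]
  by_cases hKe : c + (d + e) ∈ F
  · obtain ⟨j₂, hj₂⟩ := hL.exists_eq (x := c + (d + e)) (by simp [hKe, hd, he])
    have hβ : Enumerates (Function.update L j₂ (c + d)) (F \ {c, c + (d + e)}) := by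
      rw [Finset.pair_comm] at hL ⊢
      simpa [hj₂] using hL.update_hole hK hcd.symm j₂
    have hβ_mem := (deltaOfFinset_mem_iff hβ).mp (hcorner (d + e) (by simp [hd]) hKe)
    rw [powerSumDiff_deltaOfList_eq_add hF hL he hcd hj₁ (hj₂.trans (add_assoc c d e).symm)]
      at hpow
    exact (V.add_mem_iff_left (V.smul_mem _ hβ_mem)).mp hpow
  · rwa [powerSumDiff_deltaOfList_eq_single hF hL he hj₁ fun t h =>
      hKe (add_assoc c d e ▸ h ▸ (Finset.mem_sdiff.mp (hL.mem t)).1)] at hpow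

theorem deltaOfFinset_sdiff_pair_mem (hF : IsLowerSet (F : Set (ℕ × ℕ)))
    (hcard : F.card = n + 2) (hV : ∀ m, ∀ P ∈ V, monDiff m P ∈ V) {c : ℕ × ℕ}
    (h₁₀ : deltaOfFinset n (F \ {c, c + (1, 0)}) ∈ V)
    (h₀₁ : deltaOfFinset n (F \ {c, c + (0, 1)}) ∈ V) {H K : ℕ × ℕ} (hH : H ∈ F) (hK : K ∈ F)
    (hcH : c ≤ H) (hcK : c ≤ K) (hHK : H ≠ K) : deltaOfFinset n (F \ {H, K}) ∈ V := by
  have hcorner := deltaOfFinset_sdiff_corner_mem hF hcard hV h₁₀ h₀₁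
  obtain ⟨e, rfl⟩ := exists_add_of_le hcH
  obtain ⟨d, rfl⟩ := exists_add_of_le hcK
  rcases eq_or_ne e 0 with rfl | he
  · rw [add_zero] at hHK ⊢
    exact hcorner d (fun hd => hHK (by rw [hd, add_zero])) hK
  rcases eq_or_ne d 0 with rfl | hd
  · rw [add_zero, Finset.pair_comm]
    exact hcorner e he hH
  · exact deltaOfFinset_sdiff_mem_of_corner hF hcard hV hcorner hd he
      (fun hed => hHK (by rw [hed])) hH hK

end TwoHoles

section Ferrers

theorem isLowerSet_ferrers {h : ℕ} {μ : ℕ → ℕ} (hμ : Antitone μ) :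
    IsLowerSet (ferrers h μ : Set (ℕ × ℕ)) := by
  intro x y hyx hx
  simp only [ferrers, Finset.coe_filter, Finset.mem_product, Finset.mem_range,
    Set.mem_ofPred_eq] at hx ⊢
  have := hμ hyx.1
  have := hμ (Nat.zero_le y.1)
  have := hyx.1
  have := hyx.2
  omega

theorem mem_shadowF {F : Finset (ℕ × ℕ)} {i j : ℕ} {x : ℕ × ℕ} :
    x ∈ shadowF F i j ↔ x ∈ F ∧ (i, j) ≤ x := by
  simp [shadowF, Prod.le_def]

theorem derivSpan_le_Mk_two {n : ℕ} {F : Finset (ℕ × ℕ)} {i j : ℕ} {x : ℕ × ℕ}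
    (hc : (i, j) ∈ F) (hx : x ∈ F) (hle : (i, j) ≤ x) (hne : x ≠ (i, j)) :
    derivSpan (deltaOfFinset n (F \ {(i, j), x})) ≤ Mk n 2 F i j :=
  le_iSup₂_of_le {(i, j), x} (Finset.mem_powersetCard.mpr
    ⟨Finset.insert_subset (mem_shadowF.mpr ⟨hc, le_rfl⟩)
      (Finset.singleton_subset_iff.mpr (mem_shadowF.mpr ⟨hx, hle⟩)),
      Finset.card_pair hne.symm⟩) le_rfl

theorem Mk_two_le {n : ℕ} {F : Finset (ℕ × ℕ)} {i j : ℕ}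
    {V : Submodule ℚ (MvPolynomial (Fin n ⊕ Fin n) ℚ)} (hV : ∀ m, ∀ P ∈ V, monDiff m P ∈ V)
    (hpair : ∀ h₁ h₂ : ℕ × ℕ, h₁ ∈ shadowF F i j → h₂ ∈ shadowF F i j → h₁ ≠ h₂ →
      deltaOfFinset n (F \ {h₁, h₂}) ∈ V) :
    Mk n 2 F i j ≤ V := by
  refine iSup₂_le fun S hS => ?_
  obtain ⟨hS, hcard⟩ := Finset.mem_powersetCard.mp hS
  obtain ⟨a, b, hab, rfl⟩ := Finset.card_eq_two.mp hcard
  exact derivSpan_le hV (hpair a b (hS (by simp)) (hS (by simp)) hab)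

end Ferrers

theorem statement4_general (n h i j : ℕ) (μ : ℕ → ℕ)
    (hanti : Antitone μ)
    (hcard : (ferrers h μ).card = n + 2)
    (hc1 : (i, j) ∈ ferrers h μ) (hc2 : (i + 1, j) ∈ ferrers h μ)
    (hc3 : (i, j + 1) ∈ ferrers h μ) :
    Mk n 2 (ferrers h μ) i j
      = derivSpan (deltaOfFinset n (ferrers h μ \ {(i, j), (i, j + 1)}))
        ⊔ derivSpan (deltaOfFinset n (ferrers h μ \ {(i, j), (i + 1, j)})) ∧
    ∀ h₁ h₂ : ℕ × ℕ, h₁ ∈ shadowF (ferrers h μ) i j → h₂ ∈ shadowF (ferrers h μ) i j →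
      h₁ ≠ h₂ →
      deltaOfFinset n (ferrers h μ \ {h₁, h₂})
        ∈ derivSpan (deltaOfFinset n (ferrers h μ \ {(i, j), (i, j + 1)}))
          ⊔ derivSpan (deltaOfFinset n (ferrers h μ \ {(i, j), (i + 1, j)})) := by
  set F := ferrers h μ
  set V := derivSpan (deltaOfFinset n (F \ {(i, j), (i, j + 1)}))
    ⊔ derivSpan (deltaOfFinset n (F \ {(i, j), (i + 1, j)}))
  have hV : ∀ m, ∀ P ∈ V, monDiff m P ∈ V := fun m _ hP => monDiff_mem_derivSpan_sup m hP
  have hpair : ∀ h₁ h₂ : ℕ × ℕ, h₁ ∈ shadowF F i j → h₂ ∈ shadowF F i j → h₁ ≠ h₂ →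
      deltaOfFinset n (F \ {h₁, h₂}) ∈ V := by
    intro h₁ h₂ hs₁ hs₂ hne
    rw [mem_shadowF] at hs₁ hs₂
    exact deltaOfFinset_sdiff_pair_mem (isLowerSet_ferrers hanti) hcard hV
      (Submodule.mem_sup_right (self_mem_derivSpan _))
      (Submodule.mem_sup_left (self_mem_derivSpan _)) hs₁.1 hs₂.1 hs₁.2 hs₂.2 hne
  refine ⟨le_antisymm (Mk_two_le hV hpair) (sup_le ?_ ?_), hpair⟩
  · exact derivSpan_le_Mk_two hc1 hc3 (Prod.mk_le_mk.mpr ⟨le_rfl, Nat.le_succ j⟩) (by simp)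
  · exact derivSpan_le_Mk_two hc1 hc2 (Prod.mk_le_mk.mpr ⟨Nat.le_succ i, le_rfl⟩) (by simp)

/-- Remark 3 (second part): for a partition `μ` of `n + 2` (with `h` rows) and a cell
`(i,j)` such that `(i+1,j)` and `(i,j+1)` are also in `μ`, the space `M²_{i,j}(X,Y)`
is the sum of the two spaces attached to the two ``partition-shaped'' pairs of holes;
in particular every `Δ_{μ/{h₁,h₂}}` with `h₁ ≠ h₂` in the shadow of `(i,j)` lies in
that sum. -/
theorem statement4 (n h i j : ℕ) (μ : ℕ → ℕ)
    (hanti : Antitone μ) (hpos : ∀ r, r < h → 0 < μ r) (hzero : ∀ r, h ≤ r → μ r = 0)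
    (hcard : (ferrers h μ).card = n + 2)
    (hc1 : (i, j) ∈ ferrers h μ) (hc2 : (i + 1, j) ∈ ferrers h μ)
    (hc3 : (i, j + 1) ∈ ferrers h μ) :
    Mk n 2 (ferrers h μ) i j
      = derivSpan (deltaOfFinset n (ferrers h μ \ {(i, j), (i, j + 1)}))
        ⊔ derivSpan (deltaOfFinset n (ferrers h μ \ {(i, j), (i + 1, j)})) ∧
    ∀ h₁ h₂ : ℕ × ℕ, h₁ ∈ shadowF (ferrers h μ) i j → h₂ ∈ shadowF (ferrers h μ) i j →
      h₁ ≠ h₂ →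
      deltaOfFinset n (ferrers h μ \ {h₁, h₂})
        ∈ derivSpan (deltaOfFinset n (ferrers h μ \ {(i, j), (i, j + 1)}))
          ⊔ derivSpan (deltaOfFinset n (ferrers h μ \ {(i, j), (i + 1, j)})) :=
  statement4_general n h i j μ hanti hcard hc1 hc2 hc3
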